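/- arXiv:1912.09427 — 2 statements merged into one kernel-verified Lean document; each statement's English description precedes it below -/
import Mathlib

section
/- Let p ≥ 3 and let λ = (λ_1, ..., λ_h) be a strict partition (distinct parts) such that λ_r − λ_{r+1} ≥ p + δ_{p | λ_r} for all 1 ≤ r < h. Then the componentwise sum β_{λ_1} + β_{λ_2} + ... + β_{λ_h} is a p-strict p-restricted partition of λ_1 + ... + λ_h. -/
/-- A partition: weakly decreasing list of positive integers. -/
def IsPartition (l : List ℕ) : Prop :=
  l.Pairwise (· ≥ ·) ∧ ∀ x ∈ l, 0 < x

/-- A strict partition: strictly decreasing list of positive integers. -/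
def StrictPartition (l : List ℕ) : Prop :=
  l.Pairwise (· > ·) ∧ ∀ x ∈ l, 0 < x

/-- `p`-strict: equal consecutive parts are divisible by `p`
(parts indexed with trailing zeros appended). -/
def PStrict (p : ℕ) (l : List ℕ) : Prop :=
  ∀ r, l.getD r 0 = l.getD (r+1) 0 → p ∣ l.getD r 0

/-- `p`-restricted: consecutive differences are at most `p - δ_{p ∣ part}`. -/
def PRestricted (p : ℕ) (l : List ℕ) : Prop :=
  ∀ r, l.getD r 0 - l.getD (r+1) 0 ≤ p - (if p ∣ l.getD r 0 then 1 else 0)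

/-- `RP p n l`: `l` is a `p`-strict `p`-restricted partition of `n`. -/
def RP (p n : ℕ) (l : List ℕ) : Prop :=
  IsPartition l ∧ l.sum = n ∧ PStrict p l ∧ PRestricted p l

/-- The basic spin partition `β_n`. -/
def beta (p n : ℕ) : List ℕ :=
  if n = 0 then []
  else if n % p = 0 then List.replicate (n / p - 1) p ++ [p - 1, 1]
  else List.replicate (n / p) p ++ [n % p]

/-- Number of parts not divisible by `p`. -/
def hp' (p : ℕ) (l : List ℕ) : ℕ :=
  (l.filter (fun x => decide (¬ p ∣ x))).length

/-- Componentwise sum of two partitions (padding with zeros). -/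
def addP (a b : List ℕ) : List ℕ :=
  List.ofFn (fun i : Fin (max a.length b.length) => a.getD i 0 + b.getD i 0)

/-- `β_{l_1} + β_{l_2} + ⋯ + β_{l_h}` (componentwise sum). -/
def sumBeta (p : ℕ) (l : List ℕ) : List ℕ :=
  (l.map (beta p)).foldr addP []

/-- `Dominates a b` means `b ⊴ a`: each partial sum of `b` is at most that of `a`. -/
def Dominates (a b : List ℕ) : Prop :=
  ∀ r, (b.take r).sum ≤ (a.take r).sum

/-- Gap condition: `l_r - l_{r+1} ≥ p + δ_{p ∣ l_r}` for all consecutive parts. -/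
def Gap (p : ℕ) (l : List ℕ) : Prop :=
  ∀ r, r + 1 < l.length →
    l.getD (r+1) 0 + p + (if p ∣ l.getD r 0 then 1 else 0) ≤ l.getD r 0

/-- The residue of a node in column `s ≥ 1`: `min (c-1) (p-c)` where
`1 ≤ c ≤ p` and `s ≡ c (mod p)`. -/
def res (p s : ℕ) : ℕ :=
  min ((s - 1) % p) (p - 1 - (s - 1) % p)

/-- The content of a partition: the multiset of residues of all its nodes. -/
def content (p : ℕ) (l : List ℕ) : Multiset ℕ :=
  (l.map (fun part => ((List.range part).map (fun i => res p (i+1)) : Multiset ℕ))).sum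

/-- The partitions `μ_k` of Table I, where `n = b * p + c` with `0 ≤ c < p`. -/
def tableMu (p b c k : ℕ) : List ℕ :=
  if c = 0 then
    if k = 1 then List.replicate (b-2) p ++ [p-1, p-2, 2, 1]
    else List.replicate (b-1) p ++ [p-k, k]
  else if c = 1 then
    if k = 1 then List.replicate (b-1) p ++ [p-2, 2, 1]
    else List.replicate (b-1) p ++ [p+1-k, k]
  else if c ≤ p - 2 then
    if k ≤ (c+1)/2 - 1 then List.replicate b p ++ [c/2 + k, (c+1)/2 - k]
    else if k = (c+1)/2 then List.replicate (b-1) p ++ [p-1, c, 1]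
    else List.replicate (b-1) p ++ [p + (c+1)/2 - k, c/2 + k]
  else
    if k ≤ (p-1)/2 - 1 then List.replicate b p ++ [(p-1)/2 + k, (p-1)/2 - k]
    else List.replicate (b-1) p ++ [p-1, p-2, 2]

lemma SPF_getD_addP (a b : List ℕ) (i : ℕ) :
    (addP a b).getD i 0 = a.getD i 0 + b.getD i 0 := by
  unfold addP
  rcases lt_or_ge i (max a.length b.length) with h | h
  · rw [List.getD_eq_getElem _ _ (by simpa using h)]
    simp
  · rw [List.getD_eq_default _ _ (by simpa using h),
      List.getD_eq_default _ _ (le_trans (le_max_left _ _) h),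
      List.getD_eq_default _ _ (le_trans (le_max_right _ _) h)]

lemma SPF_sum_getD (a : List ℕ) : ∀ m, a.length ≤ m →
    ∑ i ∈ Finset.range m, a.getD i 0 = a.sum := by
  induction a with
  | nil => intro m _; simp
  | cons x t ih =>
    intro m hm
    simp only [List.length_cons] at hm
    obtain ⟨m', rfl⟩ : ∃ m', m = m' + 1 := ⟨m - 1, by omega⟩
    rw [Finset.sum_range_succ']
    simp only [List.getD_cons_succ, List.getD_cons_zero]
    rw [ih m' (by omega)]
    simp [add_comm]

lemma SPF_sum_addP (a b : List ℕ) : (addP a b).sum = a.sum + b.sum := by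
  have h : (addP a b).sum
      = ∑ i ∈ Finset.range (max a.length b.length), (a.getD i 0 + b.getD i 0) := by
    rw [addP, List.sum_ofFn]
    exact Fin.sum_univ_eq_sum_range (fun i => a.getD i 0 + b.getD i 0) _
  rw [h, Finset.sum_add_distrib, SPF_sum_getD a _ (le_max_left _ _),
    SPF_sum_getD b _ (le_max_right _ _)]

lemma SPF_getD_rep_app (k v : ℕ) (s : List ℕ) (i : ℕ) :
    (List.replicate k v ++ s).getD i 0 = if i < k then v else s.getD (i - k) 0 := by
  split
  · rename_i h
    rw [List.getD_append _ _ _ _ (by simpa using h),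
      List.getD_eq_getElem _ _ (by simpa using h)]
    simp
  · rename_i h
    rw [List.getD_append_right _ _ _ _ (by simp; omega)]
    simp

lemma SPF_getD_beta (p n : ℕ) (hp : 2 ≤ p) (hn : 0 < n) (i : ℕ) :
    (beta p n).getD i 0 =
      if i < (if p ∣ n then n / p - 1 else n / p) then p
      else if i = (if p ∣ n then n / p - 1 else n / p) then (if p ∣ n then p - 1 else n % p)
      else if i = (if p ∣ n then n / p - 1 else n / p) + 1 then (if p ∣ n then 1 else 0)
      else 0 := by
  by_cases hdn : p ∣ n
  · have h0 : n % p = 0 := Nat.mod_eq_zero_of_dvd hdn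
    have hq : 1 ≤ n / p := Nat.div_pos (Nat.le_of_dvd hn hdn) (by omega)
    simp only [beta, if_neg (show ¬ n = 0 by omega), if_pos h0, if_pos hdn,
      SPF_getD_rep_app]
    split
    · rfl
    · rename_i h1
      split
      · rename_i h2
        have : i - (n / p - 1) = 0 := by omega
        rw [this]; rfl
      · split
        · rename_i h2 h3
          have : i - (n / p - 1) = 1 := by omega
          rw [this]; rfl
        · rename_i h2 h3
          rw [List.getD_eq_default _ _ (by simp; omega)]
  · have h0 : n % p ≠ 0 := fun hc => hdn (Nat.dvd_of_mod_eq_zero hc)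
    simp only [beta, if_neg (show ¬ n = 0 by omega), if_neg h0, if_neg hdn,
      SPF_getD_rep_app]
    split
    · rfl
    · rename_i h1
      split
      · rename_i h2
        have : i - n / p = 0 := by omega
        rw [this]; rfl
      · split
        · rename_i h2 h3
          rw [List.getD_eq_default _ _ (by simp; omega)]
        · rw [List.getD_eq_default _ _ (by simp; omega)]

lemma SPF_length_beta (p n : ℕ) (hp : 2 ≤ p) (hn : 0 < n) :
    (beta p n).length = n / p + 1 := by
  by_cases hdn : p ∣ n
  · have h0 : n % p = 0 := Nat.mod_eq_zero_of_dvd hdn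
    have hq : 1 ≤ n / p := Nat.div_pos (Nat.le_of_dvd hn hdn) (by omega)
    simp only [beta, if_neg (show ¬ n = 0 by omega), if_pos h0]
    simp only [List.length_append, List.length_replicate, List.length_cons,
      List.length_nil]
    omega
  · have h0 : n % p ≠ 0 := fun hc => hdn (Nat.dvd_of_mod_eq_zero hc)
    simp only [beta, if_neg (show ¬ n = 0 by omega), if_neg h0]
    simp

lemma SPF_sum_beta (p n : ℕ) (hp : 2 ≤ p) (hn : 0 < n) : (beta p n).sum = n := by
  have hmd := Nat.div_add_mod n p
  by_cases hdn : p ∣ n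
  · have h0 : n % p = 0 := Nat.mod_eq_zero_of_dvd hdn
    have hpn : p ≤ n := Nat.le_of_dvd hn hdn
    have hq : 1 ≤ n / p := Nat.div_pos hpn (by omega)
    simp only [beta, if_neg (show ¬ n = 0 by omega), if_pos h0]
    rw [List.sum_append, List.sum_replicate]
    simp only [smul_eq_mul, List.sum_cons, List.sum_nil]
    have h1 : (n / p - 1) * p = n / p * p - p := by rw [Nat.sub_one_mul]
    have h2 : p * (n / p) = n / p * p := Nat.mul_comm _ _
    omega
  · have h0 : n % p ≠ 0 := fun hc => hdn (Nat.dvd_of_mod_eq_zero hc)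
    simp only [beta, if_neg (show ¬ n = 0 by omega), if_neg h0]
    rw [List.sum_append, List.sum_replicate]
    simp only [smul_eq_mul, List.sum_cons, List.sum_nil]
    have h2 : p * (n / p) = n / p * p := Nat.mul_comm _ _
    omega

lemma SPF_arith (p m n : ℕ) (hp : 3 ≤ p) (hm : 0 < m)
    (h : m + p + (if p ∣ n then 1 else 0) ≤ n) :
    m / p + 1 ≤ (if p ∣ n then n / p - 1 else n / p) ∧
    ((if p ∣ n then n / p - 1 else n / p) = m / p + 1 →
      (if p ∣ m then 1 else m % p) ≤ (if p ∣ n then p - 1 else n % p)) := by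
  by_cases hdn : p ∣ n
  · simp only [if_pos hdn] at h ⊢
    have h1 : m / p * p ≤ m := Nat.div_mul_le_self m p
    have hlt : p * (m / p + 1) < n := by
      have e1 : p * (m / p + 1) = m / p * p + p := by ring
      omega
    obtain ⟨q, rfl⟩ := hdn
    have hq : m / p + 1 < q := lt_of_mul_lt_mul_left hlt (by omega)
    have hq2 : (p * q) / p = q := by
      rw [Nat.mul_div_cancel_left _ (show 0 < p by omega)]
    constructor
    · omega
    · intro _
      by_cases hdm : p ∣ m
      · simp only [if_pos hdm]; omega
      · simp only [if_neg hdm]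
        have := Nat.mod_lt m (show 0 < p by omega)
        omega
  · simp only [if_neg hdn] at h ⊢
    have key1 : m / p + 1 ≤ n / p := by
      have h2 : (m + p) / p ≤ n / p := Nat.div_le_div_right (by omega)
      rwa [Nat.add_div_right _ (by omega)] at h2
    refine ⟨key1, fun hEq => ?_⟩
    by_cases hdm : p ∣ m
    · simp only [if_pos hdm]
      have : n % p ≠ 0 := fun h0 => hdn (Nat.dvd_of_mod_eq_zero h0)
      omega
    · simp only [if_neg hdm]
      have e1 := Nat.div_add_mod m p
      have e2 := Nat.div_add_mod n p
      have e3 : p * (n / p) = p * (m / p) + p := by rw [hEq]; ring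
      omega

lemma SPF_key (p : ℕ) (hp : 3 ≤ p) (n : ℕ) (hn : 0 < n) (F : ℕ → ℕ) (L e : ℕ)
    (hsupp : ∀ i, F i ≠ 0 ↔ i < L)
    (hmono : ∀ i, F (i+1) ≤ F i)
    (hstrict : ∀ i, F i = F (i+1) → p ∣ F i)
    (hres : ∀ i, F i - F (i+1) ≤ p - (if p ∣ F i then 1 else 0))
    (he : L ≠ 0 → F (L-1) = e)
    (heb : e < p)
    (hLk : L ≤ (if p ∣ n then n / p - 1 else n / p))
    (het : (if p ∣ n then n / p - 1 else n / p) = L →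
        e ≤ (if p ∣ n then p - 1 else n % p)) :
    (∀ i, (beta p n).getD i 0 + F i ≠ 0 ↔ i < n / p + 1) ∧
    (∀ i, (beta p n).getD (i+1) 0 + F (i+1) ≤ (beta p n).getD i 0 + F i) ∧
    (∀ i, (beta p n).getD i 0 + F i = (beta p n).getD (i+1) 0 + F (i+1) →
        p ∣ ((beta p n).getD i 0 + F i)) ∧
    (∀ i, (beta p n).getD i 0 + F i - ((beta p n).getD (i+1) 0 + F (i+1)) ≤
        p - (if p ∣ ((beta p n).getD i 0 + F i) then 1 else 0)) ∧
    (F (n / p) = 0) ∧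
    ((beta p n).getD (n / p) 0 = (if p ∣ n then 1 else n % p)) := by
  have hpd1 : ¬ p ∣ 1 := by intro h; have := Nat.le_of_dvd one_pos h; omega
  have hB : ∀ i, (beta p n).getD i 0 =
      if i < (if p ∣ n then n / p - 1 else n / p) then p
      else if i = (if p ∣ n then n / p - 1 else n / p) then (if p ∣ n then p - 1 else n % p)
      else if i = (if p ∣ n then n / p - 1 else n / p) + 1 then (if p ∣ n then 1 else 0)
      else 0 := fun i => SPF_getD_beta p n (by omega) hn i
  set k := (if p ∣ n then n / p - 1 else n / p) with hkdef
  set t0 := (if p ∣ n then p - 1 else n % p) with ht0def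
  set t1 := (if p ∣ n then 1 else 0) with ht1def
  have f1 : 0 < t0 := by
    rw [ht0def]; split
    · omega
    · rename_i hdn
      have : n % p ≠ 0 := fun hc => hdn (Nat.dvd_of_mod_eq_zero hc)
      omega
  have f2 : t0 < p := by
    rw [ht0def]; split
    · omega
    · exact Nat.mod_lt _ (by omega)
  have f3 : t1 ≤ 1 := by rw [ht1def]; split <;> omega
  have f4 : t1 < t0 := by
    rw [ht1def, ht0def]; split
    · omega
    · rename_i hdn
      have : n % p ≠ 0 := fun hc => hdn (Nat.dvd_of_mod_eq_zero hc)
      omega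
  have f5 : n / p = k + t1 := by
    rw [hkdef, ht1def]; split
    · rename_i hdn
      have : 0 < n / p := Nat.div_pos (Nat.le_of_dvd hn hdn) (by omega)
      omega
    · omega
  have f6 : ¬ p ∣ t0 := fun h => by
    have := Nat.le_of_dvd f1 h
    omega
  have hF0 : ∀ i, L ≤ i → F i = 0 := fun i h => by
    by_contra hne
    exact absurd ((hsupp i).mp hne) (by omega)
  have hFpos : ∀ i, i < L → 1 ≤ F i := fun i h =>
    Nat.one_le_iff_ne_zero.mpr ((hsupp i).mpr h)
  have he1 : L ≠ 0 → 1 ≤ e := fun h => by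
    rw [← he h]; exact hFpos _ (by omega)
  refine ⟨?_, ?_, ?_, ?_, ?_, ?_⟩
  · -- support
    intro i
    rw [hB i]
    rcases lt_or_ge i L with h | h
    · have h2 := hFpos i h
      split_ifs <;> omega
    · have h2 := hF0 i h
      split_ifs <;> omega
  · -- monotone
    intro i
    have h1 := hmono i
    rw [hB i, hB (i+1)]
    rcases lt_trichotomy (i+1) L with h | h | h
    · split_ifs <;> omega
    · have hFi : F i = e := by
        have h' := he (by omega)
        have h'' : L - 1 = i := by omega
        rwa [h''] at h'
      have hFi1 : F (i+1) = 0 := hF0 _ (by omega)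
      split_ifs <;> omega
    · have hFi : F i = 0 := hF0 _ (by omega)
      have hFi1 : F (i+1) = 0 := hF0 _ (by omega)
      split_ifs <;> omega
  · -- p-strict
    intro i
    rw [hB i, hB (i+1)]
    rcases lt_trichotomy (i+1) L with h | h | h
    · rw [if_pos (show i < k by omega), if_pos (show i+1 < k by omega)]
      intro hEq
      have hEq' : F i = F (i+1) := by omega
      exact dvd_add (dvd_refl p) (hstrict i hEq')
    · have hFi : F i = e := by
        have h' := he (by omega)
        have h'' : L - 1 = i := by omega
        rwa [h''] at h'
      have hFi1 : F (i+1) = 0 := hF0 _ (by omega)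
      have he2 : 1 ≤ e := he1 (by omega)
      split_ifs <;> (intro hEq; exfalso; omega)
    · have hFi : F i = 0 := hF0 _ (by omega)
      have hFi1 : F (i+1) = 0 := hF0 _ (by omega)
      rcases lt_trichotomy i k with h2 | h2 | h2
      · rw [if_pos h2]
        intro _
        rw [hFi]
        simp
      · rw [if_neg (show ¬ i < k by omega), if_pos h2,
          if_neg (show ¬ i+1 < k by omega), if_neg (show ¬ i+1 = k by omega),
          if_pos (show i+1 = k+1 by omega)]
        intro hEq; exfalso; omega
      · by_cases h3 : i = k + 1
        · rw [if_neg (show ¬ i < k by omega), if_neg (show ¬ i = k by omega),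
            if_pos h3, if_neg (show ¬ i+1 < k by omega),
            if_neg (show ¬ i+1 = k by omega), if_neg (show ¬ i+1 = k+1 by omega)]
          intro hEq
          have ht : t1 = 0 := by omega
          rw [ht, hFi]
          simp
        · rw [if_neg (show ¬ i < k by omega), if_neg (show ¬ i = k by omega),
            if_neg h3, if_neg (show ¬ i+1 < k by omega),
            if_neg (show ¬ i+1 = k by omega), if_neg (show ¬ i+1 = k+1 by omega)]
          intro _
          rw [hFi]
          simp
  · -- p-restricted
    intro i
    rw [hB i, hB (i+1)]
    rcases lt_trichotomy (i+1) L with h | h | h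
    · rw [if_pos (show i < k by omega), if_pos (show i+1 < k by omega)]
      have h1 := hres i
      by_cases hd2 : p ∣ F i
      · rw [if_pos hd2] at h1
        rw [if_pos (dvd_add (dvd_refl p) hd2)]
        omega
      · rw [if_neg hd2] at h1
        rw [if_neg (show ¬ p ∣ p + F i from fun hc => hd2 (Nat.dvd_add_self_left.mp hc))]
        omega
    · have hL0 : L ≠ 0 := by omega
      have hFi : F i = e := by
        have h' := he hL0
        have h'' : L - 1 = i := by omega
        rwa [h''] at h'
      have hFi1 : F (i+1) = 0 := hF0 _ (by omega)
      have he2 : 1 ≤ e := he1 hL0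
      have hnde : ¬ p ∣ (p + F i) := by
        rw [hFi]
        intro hc
        have hde : p ∣ e := Nat.dvd_add_self_left.mp hc
        have := Nat.le_of_dvd (by omega) hde
        omega
      rw [if_pos (show i < k by omega)]
      rcases eq_or_lt_of_le hLk with h2 | h2
      · rw [if_neg (show ¬ i+1 < k by omega), if_pos (show i+1 = k by omega),
          if_neg hnde]
        have := het h2.symm
        omega
      · rw [if_pos (show i+1 < k by omega), if_neg hnde]
        omega
    · have hFi : F i = 0 := hF0 _ (by omega)
      have hFi1 : F (i+1) = 0 := hF0 _ (by omega)
      rcases lt_trichotomy i k with h2 | h2 | h2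
      · rw [if_pos h2]
        have hdvd : p ∣ p + F i := by rw [hFi]; simp
        rw [if_pos hdvd]
        rcases eq_or_lt_of_le (show i+1 ≤ k by omega) with h3 | h3
        · rw [if_neg (show ¬ i+1 < k by omega), if_pos h3]
          omega
        · rw [if_pos h3]
          omega
      · rw [if_neg (show ¬ i < k by omega), if_pos h2,
          if_neg (show ¬ i+1 < k by omega), if_neg (show ¬ i+1 = k by omega),
          if_pos (show i+1 = k+1 by omega)]
        have hnd : ¬ p ∣ (t0 + F i) := by rw [hFi]; simpa using f6
        rw [if_neg hnd]
        omega
      · by_cases h3 : i = k + 1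
        · rw [if_neg (show ¬ i < k by omega), if_neg (show ¬ i = k by omega),
            if_pos h3, if_neg (show ¬ i+1 < k by omega),
            if_neg (show ¬ i+1 = k by omega), if_neg (show ¬ i+1 = k+1 by omega)]
          have ht1 : t1 = 0 ∨ t1 = 1 := by omega
          rcases ht1 with ht | ht
          · rw [ht, hFi, hFi1]
            split <;> omega
          · rw [ht, hFi, hFi1]
            rw [if_neg (show ¬ p ∣ 1 + 0 by simpa using hpd1)]
            omega
        · rw [if_neg (show ¬ i < k by omega), if_neg (show ¬ i = k by omega),
            if_neg h3, if_neg (show ¬ i+1 < k by omega),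
            if_neg (show ¬ i+1 = k by omega), if_neg (show ¬ i+1 = k+1 by omega)]
          rw [hFi, hFi1]
          split <;> omega
  · exact hF0 _ (by omega)
  · rw [hB (n / p)]
    by_cases hdn : p ∣ n
    · have e1 : t1 = 1 := by rw [ht1def, if_pos hdn]
      rw [if_neg (show ¬ n / p < k by omega), if_neg (show ¬ n / p = k by omega),
        if_pos (show n / p = k + 1 by omega), ht1def, if_pos hdn, if_pos hdn]
    · have e1 : t1 = 0 := by rw [ht1def, if_neg hdn]
      rw [if_neg (show ¬ n / p < k by omega), if_pos (show n / p = k by omega),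
        ht0def, if_neg hdn, if_neg hdn]

lemma SPF_isPartition_of (l : List ℕ) (h1 : ∀ i, l.getD (i+1) 0 ≤ l.getD i 0)
    (h2 : ∀ i, i < l.length → 0 < l.getD i 0) : IsPartition l := by
  constructor
  · have hch : l.IsChain (· ≥ ·) := by
      rw [List.isChain_iff_getElem]
      intro i hi
      have h := h1 i
      rw [List.getD_eq_getElem _ _ (by omega), List.getD_eq_getElem _ _ (by omega)] at h
      simpa [List.get_eq_getElem] using h
    exact List.isChain_iff_pairwise.mp hch
  · intro x hx
    obtain ⟨i, hi, rfl⟩ := List.mem_iff_getElem.mp hx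
    have := h2 i hi
    rwa [List.getD_eq_getElem _ _ hi] at this

lemma SPF_gap_tail (p n : ℕ) (t : List ℕ) (h : Gap p (n :: t)) : Gap p t := by
  intro r hr
  have h2 := h (r+1) (by simp; omega)
  simpa using h2

lemma SPF_mainAux (p : ℕ) (hp : 3 ≤ p) :
    ∀ l : List ℕ, StrictPartition l → Gap p l →
    (∀ i, (sumBeta p l).getD i 0 ≠ 0 ↔
        i < (if l.headD 0 = 0 then 0 else l.headD 0 / p + 1)) ∧
    (sumBeta p l).length = (if l.headD 0 = 0 then 0 else l.headD 0 / p + 1) ∧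
    (∀ i, (sumBeta p l).getD (i+1) 0 ≤ (sumBeta p l).getD i 0) ∧
    PStrict p (sumBeta p l) ∧ PRestricted p (sumBeta p l) ∧
    ((if l.headD 0 = 0 then 0 else l.headD 0 / p + 1) ≠ 0 →
        (sumBeta p l).getD ((if l.headD 0 = 0 then 0 else l.headD 0 / p + 1) - 1) 0 =
          (if p ∣ l.headD 0 then 1 else l.headD 0 % p)) ∧
    (sumBeta p l).sum = l.sum := by
  intro l
  induction l with
  | nil =>
    intro _ _
    refine ⟨by simp [sumBeta], by simp [sumBeta], by simp [sumBeta], ?_, ?_, by simp, by simp [sumBeta]⟩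
    · intro r
      simp [sumBeta]
    · intro r
      simp only [sumBeta, List.map_nil, List.foldr_nil, List.getD_nil]
      split <;> omega
  | cons n t ih =>
    intro hl hg
    have hn : 0 < n := hl.2 n List.mem_cons_self
    have hlt : StrictPartition t :=
      ⟨hl.1.of_cons, fun x hx => hl.2 x (List.mem_cons_of_mem _ hx)⟩
    have hgt : Gap p t := SPF_gap_tail p n t hg
    obtain ⟨A1, A2, A3, A4, A5, A6, A7⟩ := ih hlt hgt
    have hrw : sumBeta p (n :: t) = addP (beta p n) (sumBeta p t) := rfl
    have hGD : ∀ i, (sumBeta p (n :: t)).getD i 0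
        = (beta p n).getD i 0 + (sumBeta p t).getD i 0 := by
      intro i
      rw [hrw, SPF_getD_addP]
    have heb : (if p ∣ t.headD 0 then 1 else t.headD 0 % p) < p := by
      split
      · omega
      · exact Nat.mod_lt _ (by omega)
    have hke : (if t.headD 0 = 0 then 0 else t.headD 0 / p + 1)
          ≤ (if p ∣ n then n / p - 1 else n / p) ∧
        ((if p ∣ n then n / p - 1 else n / p)
            = (if t.headD 0 = 0 then 0 else t.headD 0 / p + 1) →
          (if p ∣ t.headD 0 then 1 else t.headD 0 % p)
            ≤ (if p ∣ n then p - 1 else n % p)) := by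
      cases t with
      | nil =>
        simp only [List.headD_nil, if_pos rfl]
        constructor
        · exact Nat.zero_le _
        · intro _
          simp only [dvd_zero, ↓reduceIte]
          by_cases hdn : p ∣ n
          · simp only [if_pos hdn]; omega
          · simp only [if_neg hdn]
            have : n % p ≠ 0 := fun hc => hdn (Nat.dvd_of_mod_eq_zero hc)
            omega
      | cons m t' =>
        have hm : 0 < m := hl.2 m (by simp)
        have hgap0 : m + p + (if p ∣ n then 1 else 0) ≤ n := by
          have h2 := hg 0 (by simp)
          simpa using h2
        simp only [List.headD_cons, (show m ≠ 0 by omega), ↓reduceIte]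
        exact SPF_arith p m n hp hm hgap0
    obtain ⟨K1, K2, K3, K4, K5, K6⟩ :=
      SPF_key p hp n hn (fun i => (sumBeta p t).getD i 0)
        (if t.headD 0 = 0 then 0 else t.headD 0 / p + 1)
        (if p ∣ t.headD 0 then 1 else t.headD 0 % p)
        A1 A3 (fun i => A4 i) (fun i => A5 i) A6 heb hke.1 hke.2
    have hhd : (n :: t).headD 0 = n := rfl
    refine ⟨?_, ?_, ?_, ?_, ?_, ?_, ?_⟩
    · intro i
      rw [hGD i, hhd, if_neg (show ¬ n = 0 by omega)]
      exact K1 i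
    · have hlen : (sumBeta p (n :: t)).length
          = max (beta p n).length (sumBeta p t).length := by
        rw [hrw, addP, List.length_ofFn]
      rw [hlen, SPF_length_beta p n (by omega) hn, A2, hhd,
        if_neg (show ¬ n = 0 by omega)]
      have h1 := hke.1
      have hkn : (if p ∣ n then n / p - 1 else n / p) ≤ n / p := by
        rcases Classical.em (p ∣ n) with h | h
        · rw [if_pos h]; exact Nat.sub_le _ _
        · rw [if_neg h]
      have h2 : (if t.headD 0 = 0 then 0 else t.headD 0 / p + 1) ≤ n / p + 1 :=
        le_trans h1 (le_trans hkn (Nat.le_succ _))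
      exact Nat.max_eq_left h2
    · intro i
      rw [hGD i, hGD (i+1)]
      exact K2 i
    · intro r
      rw [hGD r, hGD (r+1)]
      exact K3 r
    · intro r
      rw [hGD r, hGD (r+1)]
      exact K4 r
    · intro _
      rw [hhd, if_neg (show ¬ n = 0 by omega)]
      simp only [Nat.add_sub_cancel]
      rw [hGD (n / p), K6, K5]
      exact Nat.add_zero _
    · rw [hrw, SPF_sum_addP, SPF_sum_beta p n (by omega) hn, A7]
      simp

/-- for `p ≥ 3` and a strict partition `λ` with
`λ_r - λ_{r+1} ≥ p + δ_{p ∣ λ_r}` for all consecutive parts, the componentwise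
sum `β_{λ_1} + ⋯ + β_{λ_h}` is a `p`-strict `p`-restricted partition of `∑ λ_r`. -/
theorem stmt6 (p : ℕ) (hp : 3 ≤ p) (l : List ℕ)
    (hl : StrictPartition l) (hg : Gap p l) :
    RP p l.sum (sumBeta p l) := by
  obtain ⟨A1, A2, A3, A4, A5, A6, A7⟩ := SPF_mainAux p hp l hl hg
  refine ⟨SPF_isPartition_of _ A3 ?_, A7, A4, A5⟩
  intro i hi
  rw [A2] at hi
  have := (A1 i).mpr hi
  omega
end

section
/- Let p = 3 and n > 3, and set m = ⌊(n−1)/2⌋ − 1 − δ_{n ≡ 3 (mod 6)}. Then for all 0 ≤ j ≤ m, the componentwise sum β_{n−j} + β_j is a 3-strict 3-restricted partition of n, i.e. β_{n−j} + β_j ∈ RP_3(n). -/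
/-! ### Auxiliary machinery for `stmt19` -/

/-- Pointwise description of `beta 3`. -/
def betaFn (m i : ℕ) : ℕ :=
  if m = 0 then 0
  else if m % 3 = 0 then
    if m = 3*(i+1) then 2 else if m = 3*i then 1 else min 3 (m - 3*i)
  else min 3 (m - 3*i)

lemma betaFn_cases (m i : ℕ) :
    (m = 0 ∧ betaFn m i = 0) ∨
    (m ≠ 0 ∧ m % 3 = 0 ∧ m = 3*(i+1) ∧ betaFn m i = 2) ∨
    (m ≠ 0 ∧ m % 3 = 0 ∧ m = 3*i ∧ betaFn m i = 1) ∨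
    (m ≠ 0 ∧ m % 3 = 0 ∧ m ≠ 3*(i+1) ∧ m ≠ 3*i ∧ betaFn m i = min 3 (m - 3*i)) ∨
    (m % 3 ≠ 0 ∧ betaFn m i = min 3 (m - 3*i)) := by
  unfold betaFn
  split_ifs <;> tauto

lemma getD_replicate_append (k v : ℕ) (t : List ℕ) (i : ℕ) :
    (List.replicate k v ++ t).getD i 0 = if i < k then v else t.getD (i - k) 0 := by
  split_ifs with h
  · rw [List.getD_append _ _ _ _ (by simpa using h)]
    rw [List.getD_eq_getElem _ _ (by simpa using h), List.getElem_replicate]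
  · rw [List.getD_append_right _ _ _ _ (by simpa using h), List.length_replicate]

lemma beta_getD (m i : ℕ) : (beta 3 m).getD i 0 = betaFn m i := by
  rcases Nat.eq_zero_or_pos m with rfl | hm
  · simp [beta, betaFn]
  by_cases h3 : m % 3 = 0
  · have e : beta 3 m = List.replicate (m/3-1) 3 ++ [2, 1] := by
      unfold beta
      rw [if_neg (by omega), if_pos h3]
    rw [e, getD_replicate_append]
    rcases Nat.lt_or_ge i (m/3-1) with h | h
    · rw [if_pos h]
      unfold betaFn
      split_ifs <;> omega
    · rw [if_neg (by omega)]
      rcases Nat.lt_or_ge i (m/3) with h2 | h2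
      · have e0 : i - (m/3-1) = 0 := by omega
        rw [e0, List.getD_cons_zero]
        unfold betaFn
        split_ifs <;> omega
      rcases Nat.lt_or_ge i (m/3+1) with h4 | h4
      · have e1 : i - (m/3-1) = 1 := by omega
        rw [e1, List.getD_cons_succ, List.getD_cons_zero]
        unfold betaFn
        split_ifs <;> omega
      · rw [List.getD_eq_default _ _ (by simp; omega)]
        unfold betaFn
        split_ifs <;> omega
  · have e : beta 3 m = List.replicate (m/3) 3 ++ [m % 3] := by
      unfold beta
      rw [if_neg (by omega), if_neg h3]
    rw [e, getD_replicate_append]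
    rcases Nat.lt_or_ge i (m/3) with h | h
    · rw [if_pos h]
      unfold betaFn
      split_ifs <;> omega
    · rw [if_neg (by omega)]
      rcases Nat.lt_or_ge i (m/3+1) with h2 | h2
      · have e0 : i - m/3 = 0 := by omega
        rw [e0, List.getD_cons_zero]
        unfold betaFn
        split_ifs <;> omega
      · rw [List.getD_eq_default _ _ (by simp; omega)]
        unfold betaFn
        split_ifs <;> omega

lemma beta_length (m : ℕ) : (beta 3 m).length = if m = 0 then 0 else m/3 + 1 := by
  unfold beta
  split_ifs <;> simp <;> omega

lemma beta_sum (m : ℕ) : (beta 3 m).sum = m := by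
  unfold beta
  split_ifs <;> simp [List.sum_replicate] <;> omega

lemma addP_getD (x y : List ℕ) (i : ℕ) :
    (addP x y).getD i 0 = x.getD i 0 + y.getD i 0 := by
  unfold addP
  rcases Nat.lt_or_ge i (max x.length y.length) with h | h
  · rw [List.getD_eq_getElem _ _ (by simpa using h)]
    simp
  · rw [List.getD_eq_default _ _ (by simpa using h),
        List.getD_eq_default _ _ (le_trans (le_max_left _ _) h),
        List.getD_eq_default _ _ (le_trans (le_max_right _ _) h)]

lemma sum_getD (l : List ℕ) : ∀ M, l.length ≤ M →
    ∑ i ∈ Finset.range M, l.getD i 0 = l.sum := by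
  induction l with
  | nil => intro M _; simp
  | cons a t ih =>
    intro M hM
    match M, hM with
    | M+1, hM =>
      rw [Finset.sum_range_succ']
      simp only [List.getD_cons_succ, List.getD_cons_zero, List.sum_cons]
      rw [ih M (by simpa using hM)]
      omega

lemma addP_sum (x y : List ℕ) : (addP x y).sum = x.sum + y.sum := by
  unfold addP
  rw [List.sum_ofFn, Fin.sum_univ_eq_sum_range (fun i => x.getD i 0 + y.getD i 0),
      Finset.sum_add_distrib,
      sum_getD _ _ (le_max_left _ _), sum_getD _ _ (le_max_right _ _)]

lemma sorted_of_getD (l : List ℕ) (h : ∀ i, l.getD (i+1) 0 ≤ l.getD i 0) :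
    l.Pairwise (· ≥ ·) := by
  rw [← List.isChain_iff_pairwise, List.isChain_iff_getElem]
  intro i hi
  have hi1 : i + 1 < l.length := by omega
  have hh := h i
  rw [List.getD_eq_getElem _ _ hi1, List.getD_eq_getElem _ _ (by omega)] at hh
  simpa [List.get_eq_getElem] using hh

set_option maxHeartbeats 2000000 in
/-- for `p = 3`, `n > 3` and
`m = ⌊(n-1)/2⌋ - 1 - δ_{n ≡ 3 (mod 6)}`, for all `0 ≤ j ≤ m` the componentwise
sum `β_{n-j} + β_j` is a `3`-strict `3`-restricted partition of `n`. -/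
theorem stmt19 (n j : ℕ) (hn : 3 < n)
    (hj : j ≤ (n - 1) / 2 - 1 - (if n % 6 = 3 then 1 else 0)) :
    RP 3 n (addP (beta 3 (n - j)) (beta 3 j)) := by
  have key : 2*j + 3 ≤ n ∧ (n % 6 = 3 → 2*j + 5 ≤ n) := by
    constructor
    · split at hj <;> omega
    · intro h6; rw [if_pos h6] at hj; omega
  obtain ⟨k1, k2⟩ := key
  have k2' : n % 6 = 3 → 2*j + 5 ≤ n := k2
  have hg : ∀ i, (addP (beta 3 (n - j)) (beta 3 j)).getD i 0
      = betaFn (n - j) i + betaFn j i := by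
    intro i; rw [addP_getD, beta_getD, beta_getD]
  refine ⟨⟨?_, ?_⟩, ?_, ?_, ?_⟩
  · -- sorted
    apply sorted_of_getD
    intro i
    rw [hg, hg]
    have c1 := betaFn_cases (n - j) i
    have c2 := betaFn_cases (n - j) (i+1)
    have c3 := betaFn_cases j i
    have c4 := betaFn_cases j (i+1)
    omega
  · -- positivity
    intro x hx
    rw [List.mem_iff_getElem] at hx
    obtain ⟨i, hi, rfl⟩ := hx
    rw [← List.getD_eq_getElem _ 0 hi]
    have hi' : i < max (beta 3 (n - j)).length (beta 3 j).length := by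
      simpa [addP] using hi
    rw [beta_length, beta_length] at hi'
    rw [hg]
    have c1 := betaFn_cases (n - j) i
    have c3 := betaFn_cases j i
    split_ifs at hi' <;> omega
  · -- sum
    rw [addP_sum, beta_sum, beta_sum]
    omega
  · -- PStrict
    intro r
    rw [hg, hg]
    have c1 := betaFn_cases (n - j) r
    have c2 := betaFn_cases (n - j) (r+1)
    have c3 := betaFn_cases j r
    have c4 := betaFn_cases j (r+1)
    omega
  · -- PRestricted
    intro r
    rw [hg, hg]
    have c1 := betaFn_cases (n - j) r
    have c2 := betaFn_cases (n - j) (r+1)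
    have c3 := betaFn_cases j r
    have c4 := betaFn_cases j (r+1)
    split_ifs <;> omega
end
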